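/- arXiv:math/0305335 — 2 statements merged into one kernel-verified Lean document; each statement's English description precedes it below -/
import Mathlib

section
/- Let V be a steplike potential with steps V₊, V₋ and threshold x_M. Let z ∈ ℝ with z > V₊ and z > V₋, and set r₊ = √(z − V₊) > 0 and r₋ = √(z − V₋) > 0. Suppose u and v are solutions of −u'' + V u = z u, and there are constants T₋, R₋, T₊, R₊ ∈ ℂ with: u(x) = T₋ e^{−i r₋ x} for all x ≤ −x_M and u(x) = e^{−i r₊ x} + R₋ e^{i r₊ x} for all x ≥ x_M; v(x) = e^{i r₋ x} + R₊ e^{−i r₋ x} for all x ≤ −x_M and v(x) = T₊ e^{i r₊ x} for all x ≥ x_M. Then r₋ T₋ · conj(R₊) + r₊ R₋ · conj(T₊) = 0, where conj denotes complex conjugation. -/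
/-!
For real `z` the conjugate `conj v` solves the same equation as `u`, so their Wronskian
`u (conj v)' - u' (conj v)` is constant: since `V` is bounded, `u'` and `v'` are locally
Lipschitz, so the Wronskian is absolutely continuous, and by the Lebesgue differentiation theorem
its derivative vanishes almost everywhere. On each tail both functions are combinations
`A e^{-ikx} + B e^{ikx}`, whose Wronskian is `2ik (A D - B C)`; equating the two tail values
gives `2i (r₋ T₋ conj R₊ + r₊ R₋ conj T₊) = 0`.
-/

open Complex MeasureTheory
open scoped Classical

/-- `u` is a solution of `-u'' + V u = z u`: `u` is differentiable with continuous
derivative, and the derivative satisfies the integrated form of the ODE. -/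
def IsSolution (V : ℝ → ℝ) (z : ℂ) (u : ℝ → ℂ) : Prop :=
  Differentiable ℝ u ∧ Continuous (deriv u) ∧
    ∀ x : ℝ, deriv u x = deriv u 0 + ∫ t in (0:ℝ)..x, ((V t : ℂ) - z) * u t

open Set Filter Topology
open scoped ComplexConjugate

noncomputable def wronskian (u v : ℝ → ℂ) (x : ℝ) : ℂ :=
  u x * deriv v x - deriv u x * v x

theorem wronskian_congr {u v u' v' : ℝ → ℂ} {x : ℝ} (hu : u =ᶠ[𝓝 x] u')
    (hv : v =ᶠ[𝓝 x] v') :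
    wronskian u v x = wronskian u' v' x := by
  simp only [wronskian, hu.eq_of_nhds, hv.eq_of_nhds, hu.deriv_eq, hv.deriv_eq]

noncomputable def planeWave (k : ℝ) (A B : ℂ) (x : ℝ) : ℂ :=
  A * exp (-(I * k * x)) + B * exp (I * k * x)

theorem hasDerivAt_planeWave (k : ℝ) (A B : ℂ) (x : ℝ) :
    HasDerivAt (planeWave k A B) (planeWave k (-(I * k * A)) (I * k * B) x) x := by
  have hexp (c : ℂ) : HasDerivAt (fun x : ℝ => exp (c * x)) (exp (c * x) * c) x := by
    simpa using ((hasDerivAt_id x).ofReal_comp.const_mul c).cexp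
  have h := ((hexp (-(I * k))).const_mul A).fun_add ((hexp (I * k)).const_mul B)
  simp only [neg_mul] at h
  refine h.congr_deriv ?_
  simp only [planeWave]
  ring

theorem wronskian_planeWave (k : ℝ) (A B C D : ℂ) (x : ℝ) :
    wronskian (planeWave k A B) (planeWave k C D) x = 2 * I * k * (A * D - B * C) := by
  have hexp : exp (-(I * k * x)) * exp (I * k * x) = 1 := by
    rw [← exp_add, neg_add_cancel, exp_zero]
  simp only [wronskian, (hasDerivAt_planeWave _ _ _ _).deriv, planeWave]
  linear_combination (2 * I * k * (A * D - B * C)) * hexp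

section IsSolution

variable {V : ℝ → ℝ} {z : ℂ} {u v : ℝ → ℂ}

theorem locallyIntegrable_potential_mul (hVmeas : Measurable V)
    (hVbdd : ∃ C : ℝ, ∀ x : ℝ, |V x| ≤ C) (z : ℂ) (hu : Continuous u) :
    LocallyIntegrable (fun t => ((V t : ℂ) - z) * u t) := by
  obtain ⟨C, hC⟩ := hVbdd
  have hV : LocallyIntegrable (fun t => (V t : ℂ)) :=
    (memLp_top_of_bound (measurable_ofReal.comp hVmeas).aestronglyMeasurable C
      (Eventually.of_forall fun t => by simpa using hC t)).locallyIntegrable le_top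
  exact (hV.sub (locallyIntegrable_const z)).mul_continuous hu

theorem exists_norm_potential_mul_le (hVbdd : ∃ C : ℝ, ∀ x : ℝ, |V x| ≤ C) (z : ℂ)
    (hu : Continuous u) (a b : ℝ) :
    ∃ C : ℝ, ∀ t ∈ uIcc a b, ‖((V t : ℂ) - z) * u t‖ ≤ C := by
  obtain ⟨CV, hCV⟩ := hVbdd
  obtain ⟨Cu, hCu⟩ := isCompact_uIcc.exists_bound_of_continuousOn hu.continuousOn
  refine ⟨(CV + ‖z‖) * Cu, fun t ht => ?_⟩
  have hVz : ‖(V t : ℂ) - z‖ ≤ CV + ‖z‖ :=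
    (norm_sub_le _ _).trans (by simpa [Complex.norm_real] using hCV t)
  rw [norm_mul]
  exact mul_le_mul hVz (hCu t ht) (norm_nonneg _) ((norm_nonneg _).trans hVz)

theorem IsSolution.conj (hu : IsSolution V z u) :
    IsSolution V (conj z) (fun x => conj (u x)) := by
  obtain ⟨hdiff, hcont, hode⟩ := hu
  have hderiv : deriv (fun x => conj (u x)) = fun x => conj (deriv u x) :=
    funext fun x => (hdiff x).hasDerivAt.star.deriv
  refine ⟨fun x => (hdiff x).hasDerivAt.star.differentiableAt, ?_, fun x => ?_⟩
  · rw [hderiv]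
    exact continuous_conj.comp hcont
  · simp only [hderiv, hode x, map_add, intervalIntegral, ← integral_conj, map_sub, map_mul,
      conj_ofReal]

theorem IsSolution.deriv_sub_deriv (hu : IsSolution V z u)
    (hq : LocallyIntegrable (fun t => ((V t : ℂ) - z) * u t)) (x y : ℝ) :
    deriv u x - deriv u y = ∫ t in y..x, ((V t : ℂ) - z) * u t := by
  rw [hu.2.2 x, hu.2.2 y, add_sub_add_left_eq_sub,
    intervalIntegral.integral_interval_sub_left
      (hq.integrableOn_isCompact isCompact_uIcc).intervalIntegrable
      (hq.integrableOn_isCompact isCompact_uIcc).intervalIntegrable]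

theorem IsSolution.ae_hasDerivAt_deriv (hu : IsSolution V z u)
    (hq : LocallyIntegrable (fun t => ((V t : ℂ) - z) * u t)) :
    ∀ᵐ x, HasDerivAt (deriv u) (((V x : ℂ) - z) * u x) x := by
  filter_upwards [_root_.LocallyIntegrable.ae_hasDerivAt_integral hq] with x hx
  rw [funext hu.2.2]
  exact (hx 0).const_add _

theorem IsSolution.lipschitzOnWith_deriv (hu : IsSolution V z u)
    (hq : LocallyIntegrable (fun t => ((V t : ℂ) - z) * u t)) {a b C : ℝ}
    (hC : ∀ t ∈ uIcc a b, ‖((V t : ℂ) - z) * u t‖ ≤ C) :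
    LipschitzOnWith (Real.toNNReal C) (deriv u) (uIcc a b) := by
  refine LipschitzOnWith.of_dist_le' fun x hx y hy => ?_
  rw [dist_eq_norm, hu.deriv_sub_deriv hq, Real.dist_eq]
  exact intervalIntegral.norm_integral_le_of_norm_le_const fun t ht =>
    hC t (uIcc_subset_uIcc hy hx (uIoc_subset_uIcc ht))

theorem IsSolution.absolutelyContinuousOnInterval (hu : IsSolution V z u) (a b : ℝ) :
    AbsolutelyContinuousOnInterval u a b :=
  (contDiff_one_iff_deriv.2 ⟨hu.1, hu.2.1⟩).contDiffOn.absolutelyContinuousOnInterval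

theorem IsSolution.absolutelyContinuousOnInterval_deriv (hVmeas : Measurable V)
    (hVbdd : ∃ C : ℝ, ∀ x : ℝ, |V x| ≤ C) (hu : IsSolution V z u) (a b : ℝ) :
    AbsolutelyContinuousOnInterval (deriv u) a b := by
  obtain ⟨C, hC⟩ := exists_norm_potential_mul_le hVbdd z hu.1.continuous a b
  have hq := locallyIntegrable_potential_mul hVmeas hVbdd z hu.1.continuous
  exact (hu.lipschitzOnWith_deriv hq hC).absolutelyContinuousOnInterval

theorem IsSolution.wronskian_eq (hVmeas : Measurable V)
    (hVbdd : ∃ C : ℝ, ∀ x : ℝ, |V x| ≤ C)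
    (hu : IsSolution V z u) (hv : IsSolution V z v) (a b : ℝ) :
    wronskian u v a = wronskian u v b := by
  have hAC : AbsolutelyContinuousOnInterval (wronskian u v) a b :=
    ((hu.absolutelyContinuousOnInterval a b).fun_smul
      (hv.absolutelyContinuousOnInterval_deriv hVmeas hVbdd a b)).sub
      ((hu.absolutelyContinuousOnInterval_deriv hVmeas hVbdd a b).fun_smul
        (hv.absolutelyContinuousOnInterval a b))
  have hW' : ∀ᵐ x, x ∈ uIcc a b → HasDerivAt (wronskian u v) 0 x := by
    filter_upwards
      [hu.ae_hasDerivAt_deriv (locallyIntegrable_potential_mul hVmeas hVbdd z hu.1.continuous),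
        hv.ae_hasDerivAt_deriv (locallyIntegrable_potential_mul hVmeas hVbdd z hv.1.continuous)]
      with x hu'' hv'' _
    exact (((hu.1 x).hasDerivAt.fun_mul hv'').fun_sub
      (hu''.fun_mul (hv.1 x).hasDerivAt)).congr_deriv (by ring)
  obtain ⟨C, hC⟩ := hAC.const_of_ae_hasDerivAt_zero hW'
  rw [hC a left_mem_uIcc, hC b right_mem_uIcc]

end IsSolution

theorem orthogonality_relation_general
    (V : ℝ → ℝ) (xM : ℝ)
    (hVmeas : Measurable V) (hVbdd : ∃ C : ℝ, ∀ x : ℝ, |V x| ≤ C)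
    (z : ℝ)
    (rp rm : ℝ)
    (u v : ℝ → ℂ) (hu : IsSolution V (z : ℂ) u) (hv : IsSolution V (z : ℂ) v)
    (Tm Rm Tp Rp : ℂ)
    (huL : ∀ x : ℝ, x ≤ -xM → u x = Tm * Complex.exp (-(Complex.I * (rm : ℂ) * x)))
    (huR : ∀ x : ℝ, xM ≤ x →
      u x = Complex.exp (-(Complex.I * (rp : ℂ) * x)) + Rm * Complex.exp (Complex.I * (rp : ℂ) * x))
    (hvL : ∀ x : ℝ, x ≤ -xM →
      v x = Complex.exp (Complex.I * (rm : ℂ) * x) + Rp * Complex.exp (-(Complex.I * (rm : ℂ) * x)))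
    (hvR : ∀ x : ℝ, xM ≤ x → v x = Tp * Complex.exp (Complex.I * (rp : ℂ) * x)) :
    (rm : ℂ) * Tm * (starRingEnd ℂ) Rp + (rp : ℂ) * Rm * (starRingEnd ℂ) Tp = 0 := by
  set w : ℝ → ℂ := fun x => conj (v x)
  have hw : IsSolution V z w := by simpa only [conj_ofReal] using hv.conj
  have hleft : wronskian u w (-(xM + 1)) =
      wronskian (planeWave rm Tm 0) (planeWave rm 1 (conj Rp)) (-(xM + 1)) := by
    refine wronskian_congr ?_ ?_ <;>
      refine eventuallyEq_of_mem (Iio_mem_nhds (show -(xM + 1) < -xM by linarith)) fun x hx => ?_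
    · simp [planeWave, huL x (le_of_lt hx)]
    · simp [w, planeWave, hvL x (le_of_lt hx), ← exp_conj]
  have hright : wronskian u w (xM + 1) =
      wronskian (planeWave rp 1 Rm) (planeWave rp (conj Tp) 0) (xM + 1) := by
    refine wronskian_congr ?_ ?_ <;>
      refine eventuallyEq_of_mem (Ioi_mem_nhds (show xM < xM + 1 by linarith)) fun x hx => ?_
    · simp [planeWave, huR x (le_of_lt hx)]
    · simp [w, planeWave, hvR x (le_of_lt hx), ← exp_conj]
  have hW := hu.wronskian_eq hVmeas hVbdd hw (-(xM + 1)) (xM + 1)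
  rw [hleft, hright, wronskian_planeWave, wronskian_planeWave] at hW
  have h2I : (2 * I : ℂ) ≠ 0 := mul_ne_zero two_ne_zero I_ne_zero
  exact mul_left_cancel₀ h2I (by linear_combination hW)

theorem orthogonality_relation
    (V : ℝ → ℝ) (Vp Vm xM : ℝ)
    (hVmeas : Measurable V) (hVbdd : ∃ C : ℝ, ∀ x : ℝ, |V x| ≤ C)
    (hxM : 0 < xM)
    (hVp : ∀ x : ℝ, xM < x → V x = Vp)
    (hVm : ∀ x : ℝ, x < -xM → V x = Vm)
    (z : ℝ) (hzp : Vp < z) (hzm : Vm < z)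
    (rp rm : ℝ) (hrp : rp = Real.sqrt (z - Vp)) (hrm : rm = Real.sqrt (z - Vm))
    (u v : ℝ → ℂ) (hu : IsSolution V (z : ℂ) u) (hv : IsSolution V (z : ℂ) v)
    (Tm Rm Tp Rp : ℂ)
    (huL : ∀ x : ℝ, x ≤ -xM → u x = Tm * Complex.exp (-(Complex.I * (rm : ℂ) * x)))
    (huR : ∀ x : ℝ, xM ≤ x →
      u x = Complex.exp (-(Complex.I * (rp : ℂ) * x)) + Rm * Complex.exp (Complex.I * (rp : ℂ) * x))
    (hvL : ∀ x : ℝ, x ≤ -xM →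
      v x = Complex.exp (Complex.I * (rm : ℂ) * x) + Rp * Complex.exp (-(Complex.I * (rm : ℂ) * x)))
    (hvR : ∀ x : ℝ, xM ≤ x → v x = Tp * Complex.exp (Complex.I * (rp : ℂ) * x)) :
    (rm : ℂ) * Tm * (starRingEnd ℂ) Rp + (rp : ℂ) * Rm * (starRingEnd ℂ) Tp = 0 :=
  orthogonality_relation_general V xM hVmeas hVbdd z rp rm u v hu hv Tm Rm Tp Rp huL huR hvL hvR
end

section
/- Let V be a steplike potential with steps V₊, V₋ and threshold x_M, let z ∈ ℂ, and let r₊, r₋ ∈ ℂ satisfy r₊² = z − V₊, r₋² = z − V₋, and r₋ ≠ 0. Suppose v₁ and v₂ are solutions of −u'' + V u = z u, and there are constants T₁, R₁, T₂, R₂ ∈ ℂ with: v₁(x) = e^{i r₋ x} + R₁ e^{−i r₋ x} for all x ≤ −x_M and v₁(x) = T₁ e^{i r₊ x} for all x ≥ x_M; v₂(x) = e^{−i r₋ x} + R₂ e^{i r₋ x} for all x ≤ −x_M and v₂(x) = T₂ e^{i r₊ x} for all x ≥ x_M. Then R₁ R₂ = 1 and T₂ = T₁ R₂. -/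
open Complex MeasureTheory
open scoped Classical

/-! Both reflection coefficients are read off from the left ray, where every solution is a
combination of `exp (± i r₋ x)`. The combination `T₁ v₂ - T₂ v₁` solves the equation and vanishes
on `[x_M, ∞)`, so by backward uniqueness (Grönwall applied to `‖u‖ + ‖u'‖`) it vanishes
identically. Since `r₋ ≠ 0`, the exponentials `exp (± i r₋ x)` are independent on a ray, which
gives `T₁ R₂ = T₂` and `T₂ R₁ = T₁`. The same argument applied to `v₁` shows `T₁ ≠ 0`. -/

lemma eq_zero_of_le_mul_integral {g : ℝ → ℝ} (hg : Continuous g) (hg0 : ∀ x, 0 ≤ g x)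
    {a b K : ℝ} (hle : ∀ x ∈ Set.Icc a b, g x ≤ K * ∫ t in x..b, g t) :
    ∀ x ∈ Set.Icc a b, g x = 0 := by
  -- Reversing time turns the hypothesis into a forward Grönwall inequality with `f (-b) = 0`.
  set f : ℝ → ℝ := fun y => ∫ t in -y..b, g t with hf
  have hf' : ∀ y, HasDerivAt f (g (-y)) y := fun y =>
    ((intervalIntegral.integral_hasDerivAt_left (hg.intervalIntegrable _ _)
      (hg.stronglyMeasurableAtFilter _ _) hg.continuousAt).comp y (hasDerivAt_neg y)).congr_deriv
      (by ring)
  have hf0 : ∀ y ∈ Set.Icc (-b) (-a), f y = 0 := by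
    refine eq_zero_of_abs_deriv_le_mul_abs_self_of_eq_zero_right (K := K)
      (fun y _ => (hf' y).continuousAt.continuousWithinAt) (fun y _ => (hf' y).hasDerivWithinAt)
      (by simp [hf]) fun y hy => ?_
    have hyb : -y ≤ b := by linarith [hy.1]
    rw [Real.norm_of_nonneg (hg0 _),
      Real.norm_of_nonneg (intervalIntegral.integral_nonneg hyb fun t _ => hg0 t)]
    exact hle (-y) ⟨by linarith [hy.2], hyb⟩
  intro x hx
  have hx' := hle x hx
  rw [show (∫ t in x..b, g t) = f (-x) by simp [hf],
    hf0 (-x) ⟨by linarith [hx.2], by linarith [hx.1]⟩, mul_zero] at hx'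
  exact le_antisymm hx' (hg0 x)

lemma coeffs_eq_zero_of_mul_exp_add_mul_exp_eq_zero {c α β : ℂ} (hc : c ≠ 0) {a : ℝ}
    (h : ∀ x : ℝ, x ≤ a → α * exp (c * x) + β * exp (-(c * x)) = 0) : α = 0 ∧ β = 0 := by
  set f : ℝ → ℂ := fun x => α * exp (c * x) + β * exp (-(c * x))
  have hf' : HasDerivAt f (c * (α * exp (c * (a - 1 : ℝ)) - β * exp (-(c * (a - 1 : ℝ)))))
      (a - 1) := by
    have hlin : HasDerivAt (fun x : ℝ => c * x) c (a - 1) := by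
      simpa using (hasDerivAt_id (a - 1 : ℝ)).ofReal_comp.const_mul c
    exact (((hlin.cexp).const_mul α).add ((hlin.neg.cexp).const_mul β)).congr_deriv
      (by simp only [Pi.neg_apply]; ring)
  have hev : f =ᶠ[nhds (a - 1)] fun _ => 0 :=
    Filter.eventually_of_mem (Iio_mem_nhds (sub_one_lt a)) fun x hx => h x (le_of_lt hx)
  have hd : c * (α * exp (c * (a - 1 : ℝ)) - β * exp (-(c * (a - 1 : ℝ)))) = 0 := by
    simpa [hf'.deriv] using hev.deriv_eq
  have hv := h (a - 1) (by linarith)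
  have hα : α * exp (c * (a - 1 : ℝ)) = 0 := by
    have hdiff := (mul_eq_zero.mp hd).resolve_left hc
    linear_combination (hv + hdiff) / 2
  have hβ : β * exp (-(c * (a - 1 : ℝ))) = 0 := by linear_combination hv - hα
  exact ⟨(mul_eq_zero.mp hα).resolve_right (exp_ne_zero _),
    (mul_eq_zero.mp hβ).resolve_right (exp_ne_zero _)⟩

section Solutions

variable {V : ℝ → ℝ} {z : ℂ} {C : ℝ}

lemma norm_ofReal_sub_le (hC : ∀ x, |V x| ≤ C) (t : ℝ) : ‖(V t : ℂ) - z‖ ≤ C + ‖z‖ :=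
  (norm_sub_le _ _).trans <| by
    rw [Complex.norm_real, Real.norm_eq_abs]; exact add_le_add_left (hC t) _

lemma intervalIntegrable_ofReal_sub_mul (hVmeas : Measurable V) (hC : ∀ x, |V x| ≤ C)
    {u : ℝ → ℂ} (hu : Continuous u) (p q : ℝ) :
    IntervalIntegrable (fun t => ((V t : ℂ) - z) * u t) volume p q := by
  have hmeas : Measurable fun t => ((V t : ℂ) - z) * u t :=
    ((Complex.measurable_ofReal.comp hVmeas).sub measurable_const).mul hu.measurable
  refine ((continuous_const.mul hu.norm).intervalIntegrable p q).mono_fun'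
    (g := fun t => (C + ‖z‖) * ‖u t‖) hmeas.aestronglyMeasurable.restrict
    (Filter.Eventually.of_forall fun t => ?_)
  dsimp only
  rw [norm_mul]
  exact mul_le_mul_of_nonneg_right (norm_ofReal_sub_le hC t) (norm_nonneg _)

namespace IsSolution

variable {u v : ℝ → ℂ}

lemma const_mul_add_const_mul (hVmeas : Measurable V) (hC : ∀ x, |V x| ≤ C)
    (hu : IsSolution V z u) (hv : IsSolution V z v) (c d : ℂ) :
    IsSolution V z (fun x => c * u x + d * v x) := by
  obtain ⟨hu_diff, hu_cont, hu_eq⟩ := hu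
  obtain ⟨hv_diff, hv_cont, hv_eq⟩ := hv
  have hderiv : deriv (fun y => c * u y + d * v y) = fun x => c * deriv u x + d * deriv v x :=
    funext fun x =>
      (((hu_diff x).hasDerivAt.const_mul c).add ((hv_diff x).hasDerivAt.const_mul d)).deriv
  refine ⟨(hu_diff.const_mul c).add (hv_diff.const_mul d), ?_, fun x => ?_⟩
  · rw [hderiv]; exact (continuous_const.mul hu_cont).add (continuous_const.mul hv_cont)
  · have hsplit : (∫ t in (0:ℝ)..x, ((V t : ℂ) - z) * (c * u t + d * v t)) =
        c * (∫ t in (0:ℝ)..x, ((V t : ℂ) - z) * u t) +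
          d * ∫ t in (0:ℝ)..x, ((V t : ℂ) - z) * v t := by
      rw [← intervalIntegral.integral_const_mul, ← intervalIntegral.integral_const_mul,
        ← intervalIntegral.integral_add
          ((intervalIntegrable_ofReal_sub_mul hVmeas hC hu_diff.continuous 0 x).const_mul c)
          ((intervalIntegrable_ofReal_sub_mul hVmeas hC hv_diff.continuous 0 x).const_mul d)]
      congr 1; funext t; ring
    rw [hderiv, hsplit]
    dsimp only
    rw [hu_eq x, hv_eq x]
    ring

lemma deriv_sub_deriv_s19 (hVmeas : Measurable V) (hC : ∀ x, |V x| ≤ C) (hu : IsSolution V z u)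
    (x y : ℝ) : deriv u x - deriv u y = ∫ t in y..x, ((V t : ℂ) - z) * u t := by
  have hint := intervalIntegrable_ofReal_sub_mul (z := z) hVmeas hC hu.1.continuous
  rw [hu.2.2 x, hu.2.2 y, ← intervalIntegral.integral_interval_sub_left (hint 0 x) (hint 0 y)]
  ring

lemma norm_add_norm_deriv_le (hVmeas : Measurable V) (hC : ∀ x, |V x| ≤ C)
    (hu : IsSolution V z u) {b : ℝ} (hb : u b = 0) (hb' : deriv u b = 0) {x : ℝ} (hx : x ≤ b) :
    ‖u x‖ + ‖deriv u x‖ ≤ (1 + (C + ‖z‖)) * ∫ t in x..b, (‖u t‖ + ‖deriv u t‖) := by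
  have hu_diff := hu.1
  have hu_cont := hu.2.1
  have hg : Continuous fun t => ‖u t‖ + ‖deriv u t‖ := hu_diff.continuous.norm.add hu_cont.norm
  have hu_le : ‖u x‖ ≤ ∫ t in x..b, (‖u t‖ + ‖deriv u t‖) := by
    rw [← norm_neg, ← zero_sub, ← hb, ← intervalIntegral.integral_deriv_eq_sub
      (fun t _ => hu_diff t) (hu_cont.intervalIntegrable _ _)]
    refine (intervalIntegral.norm_integral_le_integral_norm hx).trans <|
      intervalIntegral.integral_mono_on hx (hu_cont.norm.intervalIntegrable _ _)
        (hg.intervalIntegrable _ _) fun t _ => le_add_of_nonneg_left (norm_nonneg _)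
  have hu'_le : ‖deriv u x‖ ≤ (C + ‖z‖) * ∫ t in x..b, (‖u t‖ + ‖deriv u t‖) := by
    have hdiff := deriv_sub_deriv_s19 hVmeas hC hu b x
    rw [hb', zero_sub] at hdiff
    rw [← norm_neg, hdiff, ← intervalIntegral.integral_const_mul]
    refine (intervalIntegral.norm_integral_le_integral_norm hx).trans <|
      intervalIntegral.integral_mono_on hx
        (intervalIntegrable_ofReal_sub_mul hVmeas hC hu_diff.continuous x b).norm
        ((continuous_const.mul hg).intervalIntegrable _ _) fun t _ => ?_
    rw [norm_mul]
    exact mul_le_mul (norm_ofReal_sub_le hC t) (le_add_of_nonneg_right (norm_nonneg _))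
      (norm_nonneg _) ((norm_nonneg _).trans (norm_ofReal_sub_le hC t))
  linarith

lemma eq_zero_of_forall_ge (hVmeas : Measurable V) (hC : ∀ x, |V x| ≤ C)
    (hu : IsSolution V z u) {a : ℝ} (h0 : ∀ x, a ≤ x → u x = 0) (x : ℝ) : u x = 0 := by
  rcases le_or_gt (a + 1) x with hx | hx
  · exact h0 x (by linarith)
  have hb : u (a + 1) = 0 := h0 _ (by linarith)
  have hb' : deriv u (a + 1) = 0 := by
    have hev : u =ᶠ[nhds (a + 1)] fun _ => 0 :=
      Filter.eventually_of_mem (Ioi_mem_nhds (lt_add_one a)) fun y hy => h0 y (le_of_lt hy)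
    simpa using hev.deriv_eq
  have hg := eq_zero_of_le_mul_integral (hu.1.continuous.norm.add hu.2.1.norm)
    (fun t => add_nonneg (norm_nonneg _) (norm_nonneg _))
    (fun y hy => norm_add_norm_deriv_le hVmeas hC hu hb hb' hy.2) x ⟨le_rfl, hx.le⟩
  exact norm_eq_zero.mp ((add_eq_zero_iff_of_nonneg (norm_nonneg _) (norm_nonneg _)).mp hg).1

lemma coeffs_eq_zero_of_forall_ge (hVmeas : Measurable V) (hC : ∀ x, |V x| ≤ C)
    (hu : IsSolution V z u) {c α β : ℂ} (hc : c ≠ 0) {a b : ℝ}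
    (hleft : ∀ x : ℝ, x ≤ a → u x = α * exp (c * x) + β * exp (-(c * x)))
    (hright : ∀ x, b ≤ x → u x = 0) : α = 0 ∧ β = 0 :=
  coeffs_eq_zero_of_mul_exp_add_mul_exp_eq_zero hc fun x hx =>
    (hleft x hx).symm.trans (hu.eq_zero_of_forall_ge hVmeas hC hright x)

end IsSolution

end Solutions

theorem reflection_product_relation_right_general
    (V : ℝ → ℝ) (xM : ℝ)
    (hVmeas : Measurable V) (hVbdd : ∃ C : ℝ, ∀ x : ℝ, |V x| ≤ C)
    (z rp rm : ℂ)
    (hrm0 : rm ≠ 0)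
    (v₁ v₂ : ℝ → ℂ) (hv₁ : IsSolution V z v₁) (hv₂ : IsSolution V z v₂)
    (T₁ R₁ T₂ R₂ : ℂ)
    (hv₁L : ∀ x : ℝ, x ≤ -xM →
      v₁ x = Complex.exp (Complex.I * rm * x) + R₁ * Complex.exp (-(Complex.I * rm * x)))
    (hv₁R : ∀ x : ℝ, xM ≤ x → v₁ x = T₁ * Complex.exp (Complex.I * rp * x))
    (hv₂L : ∀ x : ℝ, x ≤ -xM →
      v₂ x = Complex.exp (-(Complex.I * rm * x)) + R₂ * Complex.exp (Complex.I * rm * x))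
    (hv₂R : ∀ x : ℝ, xM ≤ x → v₂ x = T₂ * Complex.exp (Complex.I * rp * x)) :
    R₁ * R₂ = 1 ∧ T₂ = T₁ * R₂ := by
  obtain ⟨C, hC⟩ := hVbdd
  have hc : I * rm ≠ 0 := mul_ne_zero I_ne_zero hrm0
  have hT₁ : T₁ ≠ 0 := by
    rintro rfl
    exact one_ne_zero (hv₁.coeffs_eq_zero_of_forall_ge hVmeas hC hc (b := xM)
      (fun x hx => by rw [hv₁L x hx, one_mul]) (fun x hx => by rw [hv₁R x hx, zero_mul])).1
  have hw := hv₂.const_mul_add_const_mul hVmeas hC hv₁ T₁ (-T₂)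
  obtain ⟨hTR₂, hTR₁⟩ := hw.coeffs_eq_zero_of_forall_ge hVmeas hC hc
    (α := T₁ * R₂ - T₂) (β := T₁ - T₂ * R₁) (b := xM)
    (fun x hx => by rw [hv₂L x hx, hv₁L x hx]; ring)
    (fun x hx => by rw [hv₂R x hx, hv₁R x hx]; ring)
  refine ⟨mul_left_cancel₀ hT₁ ?_, by linear_combination -hTR₂⟩
  linear_combination -hTR₁ + R₁ * hTR₂

theorem reflection_product_relation_right
    (V : ℝ → ℝ) (Vp Vm xM : ℝ)
    (hVmeas : Measurable V) (hVbdd : ∃ C : ℝ, ∀ x : ℝ, |V x| ≤ C)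
    (hxM : 0 < xM)
    (hVp : ∀ x : ℝ, xM < x → V x = Vp)
    (hVm : ∀ x : ℝ, x < -xM → V x = Vm)
    (z rp rm : ℂ) (hrp : rp ^ 2 = z - (Vp : ℂ)) (hrm : rm ^ 2 = z - (Vm : ℂ))
    (hrm0 : rm ≠ 0)
    (v₁ v₂ : ℝ → ℂ) (hv₁ : IsSolution V z v₁) (hv₂ : IsSolution V z v₂)
    (T₁ R₁ T₂ R₂ : ℂ)
    (hv₁L : ∀ x : ℝ, x ≤ -xM →
      v₁ x = Complex.exp (Complex.I * rm * x) + R₁ * Complex.exp (-(Complex.I * rm * x)))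
    (hv₁R : ∀ x : ℝ, xM ≤ x → v₁ x = T₁ * Complex.exp (Complex.I * rp * x))
    (hv₂L : ∀ x : ℝ, x ≤ -xM →
      v₂ x = Complex.exp (-(Complex.I * rm * x)) + R₂ * Complex.exp (Complex.I * rm * x))
    (hv₂R : ∀ x : ℝ, xM ≤ x → v₂ x = T₂ * Complex.exp (Complex.I * rp * x)) :
    R₁ * R₂ = 1 ∧ T₂ = T₁ * R₂ :=
  reflection_product_relation_right_general V xM hVmeas hVbdd z rp rm hrm0 v₁ v₂ hv₁ hv₂ T₁ R₁ T₂ R₂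
    hv₁L hv₁R hv₂L hv₂R
end
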